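/- arXiv:2410.07651 — 2 statements merged into one kernel-verified Lean document; each statement's English description precedes it below -/
import Mathlib

section
/- Let γ > 0, ν ≥ 0 and b̄ ∈ ℝ, and set ā₁ = 2√(γν) − b̄ and ā₂ = −2√(γν) − b̄. Then ∫_ℝ min( ν − (h + b̄)²/(4γ), 0 ) dγ₁(h) = f₂₂₁ + f₂₂₂, where f₂₂₁ = −(1/(4γ))·( (ā₁ + 2b̄)·e^{−ā₁²/2}/√(2π) + ((b̄² + 1)/2)·erfc(ā₁/√2) ) + (ν/2)·erfc(ā₁/√2) and f₂₂₂ = −(1/(4γ))·( −(ā₂ + 2b̄)·e^{−ā₂²/2}/√(2π) + ((b̄² + 1)/2)·erfc(−ā₂/√2) ) + (ν/2)·erfc(−ā₂/√2). -/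
/-! Write `φ` for the standard normal density. Since `φ' = -x φ`, the tail integrals over
`(a, ∞)` of `x φ` and `(x² - 1) φ` are `φ a` and `a φ a`, while that of `φ` is
`erfc (a / √2) / 2`; expanding `(x + b)² = (x² - 1) + 2 b x + (b² + 1)` gives every tail integral
of a quadratic times `φ` in closed form. The integrand `min (ν - (h + b)² / (4γ)) 0` equals
`ν - (h + b)² / (4γ)` on `[ā₁, ∞)` and on `(-∞, ā₂)` and vanishes in between, so the Gaussian
integral splits into an upper tail from `ā₁` and a lower tail up to `ā₂`; the symmetry
`φ (-x) = φ x` turns the latter into an upper tail with `b` replaced by `-b`. -/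

open MeasureTheory ProbabilityTheory Real

/-- The error function `erf x = (2/√π) ∫₀ˣ e^{-t²} dt`. -/
noncomputable def erf (x : ℝ) : ℝ := (2 / Real.sqrt π) * ∫ t in (0:ℝ)..x, Real.exp (-t ^ 2)

/-- The complementary error function `erfc x = 1 - erf x`. -/
noncomputable def erfc (x : ℝ) : ℝ := 1 - erf x

open Set Filter

local notation "φ" => gaussianPDFReal 0 1

lemma gaussianPDFReal_zero_one : φ = fun x ↦ exp (-x ^ 2 / 2) / √(2 * π) := by
  ext x
  simp [gaussianPDFReal, div_eq_inv_mul]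

lemma gaussianPDFReal_zero_one_neg (x : ℝ) : φ (-x) = φ x := by
  simp [gaussianPDFReal_zero_one]

lemma hasDerivAt_gaussianPDFReal_zero_one (x : ℝ) : HasDerivAt φ (-x * φ x) x := by
  rw [gaussianPDFReal_zero_one]
  refine ((((hasDerivAt_pow 2 x).fun_neg).div_const 2).exp.div_const (√(2 * π))).congr_deriv ?_
  simp only [Nat.cast_ofNat]
  ring

lemma integrable_pow_mul_gaussianPDFReal_zero_one (n : ℕ) :
    Integrable fun x ↦ x ^ n * φ x := by
  have h := (integrable_rpow_mul_exp_neg_mul_sq (b := 1 / 2) (by norm_num)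
    (s := n) (by linarith [n.cast_nonneg (α := ℝ)])).div_const (√(2 * π))
  refine h.congr (ae_of_all _ fun x ↦ ?_)
  simp only [gaussianPDFReal_zero_one, rpow_natCast]
  ring_nf

lemma integral_Ioi_of_hasDerivAt_of_integrableOn {E : Type*} [NormedAddCommGroup E]
    [NormedSpace ℝ E] [CompleteSpace E] {f f' : ℝ → E} {a : ℝ}
    (hderiv : ∀ x ∈ Ici a, HasDerivAt f (f' x) x) (f'int : IntegrableOn f' (Ioi a))
    (fint : IntegrableOn f (Ioi a)) : ∫ x in Ioi a, f' x = -f a := by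
  rw [integral_Ioi_of_hasDerivAt_of_tendsto' hderiv f'int
    (tendsto_zero_of_hasDerivAt_of_integrableOn_Ioi (fun x hx ↦ hderiv x (mem_Ici_of_Ioi hx))
      f'int fint), zero_sub]

lemma integral_Ioi_mul_gaussianPDFReal_zero_one (a : ℝ) : ∫ x in Ioi a, x * φ x = φ a := by
  have h := integral_Ioi_of_hasDerivAt_of_integrableOn (f := fun x ↦ -φ x) (a := a)
    (fun x _ ↦ by simpa using (hasDerivAt_gaussianPDFReal_zero_one x).fun_neg)
    (by simpa using (integrable_pow_mul_gaussianPDFReal_zero_one 1).integrableOn)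
    (by simpa using (integrable_pow_mul_gaussianPDFReal_zero_one 0).neg.integrableOn)
  simpa using h

lemma integral_Ioi_sq_sub_one_mul_gaussianPDFReal_zero_one (a : ℝ) :
    ∫ x in Ioi a, (x ^ 2 - 1) * φ x = a * φ a := by
  have h := integral_Ioi_of_hasDerivAt_of_integrableOn (f := fun x ↦ -(x * φ x)) (a := a)
    (f' := fun x ↦ (x ^ 2 - 1) * φ x)
    (fun x _ ↦
      ((hasDerivAt_id' x).fun_mul (hasDerivAt_gaussianPDFReal_zero_one x)).fun_neg.congr_deriv
        (by ring))
    (by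
      have := (integrable_pow_mul_gaussianPDFReal_zero_one 2).sub
        (integrable_pow_mul_gaussianPDFReal_zero_one 0)
      refine this.integrableOn.congr_fun (fun x _ ↦ ?_) measurableSet_Ioi
      simp [sub_mul])
    (by simpa using (integrable_pow_mul_gaussianPDFReal_zero_one 1).neg.integrableOn)
  simpa using h

lemma integral_Ioi_zero_gaussianPDFReal_zero_one : ∫ x in Ioi 0, φ x = 1 / 2 := by
  have hsymm : ∫ x in Iic 0, φ x = ∫ x in Ioi 0, φ x := by
    simpa [gaussianPDFReal_zero_one_neg] using integral_comp_neg_Iic 0 φ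
  have htotal := intervalIntegral.integral_Iic_add_Ioi (b := 0)
    (integrable_gaussianPDFReal 0 1).integrableOn (integrable_gaussianPDFReal 0 1).integrableOn
  rw [hsymm, integral_gaussianPDFReal_eq_one 0 one_ne_zero] at htotal
  linarith

lemma intervalIntegral_gaussianPDFReal_zero_one (a : ℝ) :
    ∫ x in 0..a, φ x = erf (a / √2) / 2 := by
  have hφ : ∀ x, φ x = exp (-(x / √2) ^ 2) / √(2 * π) := fun x ↦ by
    rw [gaussianPDFReal_zero_one, div_pow, sq_sqrt zero_le_two, ← neg_div]
  simp_rw [hφ]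
  rw [intervalIntegral.integral_comp_div (fun t ↦ exp (-t ^ 2) / √(2 * π))
    (sqrt_ne_zero'.2 zero_lt_two), intervalIntegral.integral_div, zero_div, erf, smul_eq_mul,
    sqrt_mul zero_le_two]
  field_simp

lemma integral_Ioi_gaussianPDFReal_zero_one (a : ℝ) :
    ∫ x in Ioi a, φ x = erfc (a / √2) / 2 := by
  have h := intervalIntegral.integral_Ioi_sub_Ioi' (a := 0) (b := a)
    (integrable_gaussianPDFReal 0 1).integrableOn (integrable_gaussianPDFReal 0 1).integrableOn
  rw [integral_Ioi_zero_gaussianPDFReal_zero_one, intervalIntegral_gaussianPDFReal_zero_one] at h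
  rw [erfc]
  linarith

lemma integrable_add_sq_mul_gaussianPDFReal_zero_one (b : ℝ) :
    Integrable fun x ↦ (x + b) ^ 2 * φ x := by
  have h := ((integrable_pow_mul_gaussianPDFReal_zero_one 2).add
    ((integrable_pow_mul_gaussianPDFReal_zero_one 1).const_mul (2 * b))).add
    ((integrable_pow_mul_gaussianPDFReal_zero_one 0).const_mul (b ^ 2))
  exact h.congr (ae_of_all _ fun x ↦ by simp only [Pi.add_apply]; ring)

lemma integral_Ioi_add_sq_mul_gaussianPDFReal_zero_one (a b : ℝ) :
    ∫ x in Ioi a, (x + b) ^ 2 * φ x = (a + 2 * b) * φ a + (b ^ 2 + 1) * (erfc (a / √2) / 2) := by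
  have hsq : IntegrableOn (fun x ↦ (x ^ 2 - 1) * φ x) (Ioi a) := by
    refine ((integrable_pow_mul_gaussianPDFReal_zero_one 2).sub
      (integrable_pow_mul_gaussianPDFReal_zero_one 0)).integrableOn.congr_fun
      (fun x _ ↦ ?_) measurableSet_Ioi
    simp [sub_mul]
  have hlin : IntegrableOn (fun x ↦ 2 * b * (x * φ x)) (Ioi a) := by
    simpa using ((integrable_pow_mul_gaussianPDFReal_zero_one 1).const_mul (2 * b)).integrableOn
  have hconst : IntegrableOn (fun x ↦ (b ^ 2 + 1) * φ x) (Ioi a) :=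
    ((integrable_gaussianPDFReal 0 1).const_mul _).integrableOn
  calc ∫ x in Ioi a, (x + b) ^ 2 * φ x
      = ∫ x in Ioi a, ((x ^ 2 - 1) * φ x + 2 * b * (x * φ x) + (b ^ 2 + 1) * φ x) := by
        congr 1; ext x; ring
    _ = a * φ a + 2 * b * φ a + (b ^ 2 + 1) * (erfc (a / √2) / 2) := by
        rw [integral_add (Integrable.fun_add hsq hlin) hconst, integral_add hsq hlin,
          integral_const_mul, integral_const_mul,
          integral_Ioi_sq_sub_one_mul_gaussianPDFReal_zero_one,
          integral_Ioi_mul_gaussianPDFReal_zero_one, integral_Ioi_gaussianPDFReal_zero_one]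
    _ = (a + 2 * b) * φ a + (b ^ 2 + 1) * (erfc (a / √2) / 2) := by ring

lemma integral_Ioi_gaussianPDFReal_zero_one_mul_sub_sq_div (a b ν d : ℝ) :
    ∫ x in Ioi a, φ x * (ν - (x + b) ^ 2 / d) = -(1 / d) *
        ((a + 2 * b) * exp (-a ^ 2 / 2) / √(2 * π) + ((b ^ 2 + 1) / 2) * erfc (a / √2))
      + (ν / 2) * erfc (a / √2) := by
  calc ∫ x in Ioi a, φ x * (ν - (x + b) ^ 2 / d)
      = ∫ x in Ioi a, (ν * φ x - d⁻¹ * ((x + b) ^ 2 * φ x)) := by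
        congr 1; ext x; ring
    _ = ν * (erfc (a / √2) / 2)
          - d⁻¹ * ((a + 2 * b) * φ a + (b ^ 2 + 1) * (erfc (a / √2) / 2)) := by
        rw [integral_sub ((integrable_gaussianPDFReal 0 1).const_mul ν).integrableOn
            ((integrable_add_sq_mul_gaussianPDFReal_zero_one b).const_mul _).integrableOn,
          integral_const_mul, integral_const_mul, integral_Ioi_gaussianPDFReal_zero_one,
          integral_Ioi_add_sq_mul_gaussianPDFReal_zero_one]
    _ = _ := by rw [gaussianPDFReal_zero_one]; ring

lemma integral_Iio_gaussianPDFReal_zero_one_mul_sub_sq_div (a b ν d : ℝ) :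
    ∫ x in Iio a, φ x * (ν - (x + b) ^ 2 / d) = -(1 / d) *
        (-((a + 2 * b) * exp (-a ^ 2 / 2) / √(2 * π)) + ((b ^ 2 + 1) / 2) * erfc (-a / √2))
      + (ν / 2) * erfc (-a / √2) := by
  have hreflect := integral_comp_neg_Iic a fun x ↦ φ (-x) * (ν - (-x + b) ^ 2 / d)
  simp only [neg_neg, gaussianPDFReal_zero_one_neg] at hreflect
  have hsq : ∀ x : ℝ, (-x + b) ^ 2 = (x + -b) ^ 2 := fun x ↦ by ring
  rw [← integral_Iic_eq_integral_Iio, hreflect]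
  simp only [hsq]
  rw [integral_Ioi_gaussianPDFReal_zero_one_mul_sub_sq_div, neg_sq]
  ring

lemma min_sub_sq_div_eq_indicator_add_indicator {d : ℝ} (hd : 0 < d) (ν b x : ℝ) :
    min (ν - (x + b) ^ 2 / d) 0 =
      (Ici (√(d * ν) - b)).indicator (fun x ↦ ν - (x + b) ^ 2 / d) x +
        (Iio (-√(d * ν) - b)).indicator (fun x ↦ ν - (x + b) ^ 2 / d) x := by
  set r := √(d * ν)
  have hr : 0 ≤ r := sqrt_nonneg _
  have outside (h : r ≤ |x + b|) : min (ν - (x + b) ^ 2 / d) 0 = ν - (x + b) ^ 2 / d := by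
    have : d * ν ≤ (x + b) ^ 2 := by
      by_contra! hlt
      exact h.not_gt ((lt_sqrt (abs_nonneg _)).2 (by rwa [sq_abs]))
    refine min_eq_left ?_
    rw [sub_nonpos, le_div_iff₀ hd]
    linarith
  rcases le_or_gt (r - b) x with h₁ | h₁
  · rw [indicator_of_mem (mem_Ici.2 h₁), indicator_of_notMem (notMem_Iio.2 (by linarith)),
      add_zero]
    exact outside (le_abs.2 (Or.inl (by linarith)))
  rcases lt_or_ge x (-r - b) with h₂ | h₂
  · rw [indicator_of_notMem (notMem_Ici.2 h₁), indicator_of_mem (mem_Iio.2 h₂), zero_add]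
    exact outside (le_abs.2 (Or.inr (by linarith)))
  rw [indicator_of_notMem (notMem_Ici.2 h₁), indicator_of_notMem (notMem_Iio.2 h₂), add_zero]
  -- here `-r ≤ x + b < r` forces `0 < r`, so `√(d * ν)` is not the junk value of a negative
  have hdν : r ^ 2 = d * ν := sq_sqrt (sqrt_pos.1 (by linarith) : 0 < d * ν).le
  refine min_eq_right ?_
  rw [sub_nonneg, div_le_iff₀ hd]
  nlinarith [sq_le_sq' (show -r ≤ x + b by linarith) (show x + b ≤ r by linarith)]

lemma integrable_gaussianPDFReal_zero_one_mul_sub_sq_div (b ν d : ℝ) :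
    Integrable fun x ↦ φ x * (ν - (x + b) ^ 2 / d) :=
  (((integrable_gaussianPDFReal 0 1).const_mul ν).sub
    ((integrable_add_sq_mul_gaussianPDFReal_zero_one b).const_mul d⁻¹)).congr
    (ae_of_all _ fun x ↦ by simp only [Pi.sub_apply]; ring)

lemma integral_min_sub_sq_div_gaussianReal {d : ℝ} (hd : 0 < d) (ν b : ℝ) :
    ∫ x, min (ν - (x + b) ^ 2 / d) 0 ∂gaussianReal 0 1 =
      (∫ x in Ioi (√(d * ν) - b), φ x * (ν - (x + b) ^ 2 / d)) +
        ∫ x in Iio (-√(d * ν) - b), φ x * (ν - (x + b) ^ 2 / d) := by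
  have hint := integrable_gaussianPDFReal_zero_one_mul_sub_sq_div b ν d
  rw [integral_gaussianReal_eq_integral_smul one_ne_zero]
  simp_rw [smul_eq_mul, min_sub_sq_div_eq_indicator_add_indicator hd, mul_add,
    ← indicator_mul_right]
  rw [integral_add (hint.indicator measurableSet_Ici) (hint.indicator measurableSet_Iio),
    integral_indicator measurableSet_Ici, integral_indicator measurableSet_Iio,
    integral_Ici_eq_integral_Ioi]

theorem stmt7_general (γ ν bbar : ℝ) (hγ : 0 < γ)
    (a₁ a₂ f221 f222 : ℝ)
    (ha₁ : a₁ = 2 * Real.sqrt (γ * ν) - bbar)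
    (ha₂ : a₂ = -(2 * Real.sqrt (γ * ν)) - bbar)
    (hf221 : f221 = -(1 / (4 * γ)) *
        ((a₁ + 2 * bbar) * Real.exp (-a₁ ^ 2 / 2) / Real.sqrt (2 * π)
          + ((bbar ^ 2 + 1) / 2) * erfc (a₁ / Real.sqrt 2))
      + (ν / 2) * erfc (a₁ / Real.sqrt 2))
    (hf222 : f222 = -(1 / (4 * γ)) *
        (-((a₂ + 2 * bbar) * Real.exp (-a₂ ^ 2 / 2) / Real.sqrt (2 * π))
          + ((bbar ^ 2 + 1) / 2) * erfc (-a₂ / Real.sqrt 2))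
      + (ν / 2) * erfc (-a₂ / Real.sqrt 2)) :
    ∫ h : ℝ, min (ν - (h + bbar) ^ 2 / (4 * γ)) 0 ∂(gaussianReal 0 1) = f221 + f222 := by
  have hsqrt : √(4 * γ * ν) = 2 * √(γ * ν) := by
    rw [mul_assoc, sqrt_mul zero_le_four, show (4 : ℝ) = 2 ^ 2 by norm_num,
      sqrt_sq zero_le_two]
  rw [integral_min_sub_sq_div_gaussianReal (by positivity), hsqrt, ← ha₁, ← ha₂,
    integral_Ioi_gaussianPDFReal_zero_one_mul_sub_sq_div,
    integral_Iio_gaussianPDFReal_zero_one_mul_sub_sq_div, hf221, hf222]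

/-- The shifted Gaussian integral giving `f₂₂₁` and `f₂₂₂` at the first level of lifting:
`∫ min(ν - (h + b̄)²/(4γ), 0) dγ₁(h) = f₂₂₁ + f₂₂₂` in closed form. -/
theorem stmt7 (γ ν bbar : ℝ) (hγ : 0 < γ) (hν : 0 ≤ ν)
    (a₁ a₂ f221 f222 : ℝ)
    (ha₁ : a₁ = 2 * Real.sqrt (γ * ν) - bbar)
    (ha₂ : a₂ = -(2 * Real.sqrt (γ * ν)) - bbar)
    (hf221 : f221 = -(1 / (4 * γ)) *
        ((a₁ + 2 * bbar) * Real.exp (-a₁ ^ 2 / 2) / Real.sqrt (2 * π)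
          + ((bbar ^ 2 + 1) / 2) * erfc (a₁ / Real.sqrt 2))
      + (ν / 2) * erfc (a₁ / Real.sqrt 2))
    (hf222 : f222 = -(1 / (4 * γ)) *
        (-((a₂ + 2 * bbar) * Real.exp (-a₂ ^ 2 / 2) / Real.sqrt (2 * π))
          + ((bbar ^ 2 + 1) / 2) * erfc (-a₂ / Real.sqrt 2))
      + (ν / 2) * erfc (-a₂ / Real.sqrt 2)) :
    ∫ h : ℝ, min (ν - (h + bbar) ^ 2 / (4 * γ)) 0 ∂(gaussianReal 0 1) = f221 + f222 :=
  stmt7_general γ ν bbar hγ a₁ a₂ f221 f222 ha₁ ha₂ hf221 hf222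
end

section
/- Let γ > 0, ν ≥ 0, c₂ > 0, q₂ ∈ [0,1) and ν₁, d̄, h₃ ∈ ℝ, and assume 2γ > c₂·(1 − q₂). Set D̄ = ( −(h₃·√q₂ + d̄·ν₁) − 2√(γν) )/√(1−q₂), Ē = ( −(h₃·√q₂ + d̄·ν₁) + 2√(γν) )/√(1−q₂), Ā = √(c₂(1−q₂)), B̄₁ = h₃·√(c₂q₂) + √c₂·d̄·ν₁, C̄ = 4γ, F̄ = c₂·d̄·√(1−q₂), B̄ = F̄·C̄/(2Ā) + B̄₁, Ḡ = (B̄₁² − B̄²)/C̄. Then ∫_ℝ exp( c₂·[ ( √(1−q₂)·h + √q₂·h₃ )·d̄ − min( ν − ( √(1−q₂)·h + √q₂·h₃ + ν₁·d̄ )²/(4γ), 0 ) ] ) dγ₁(h) = exp( c₂·d̄·√q₂·h₃ ) · ( Ī₁ + Ī₂ ), where Ī₁ = ( √C̄ / (2·√(C̄ − 2Ā²)) ) · exp( −c₂·ν + Ḡ + B̄²/(C̄ − 2Ā²) ) · (2 − Q̄) with Q̄ = erf( (C̄·Ē − 2Ā²·Ē − 2Ā·B̄)/(√2·√C̄·√(C̄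 − 2Ā²)) ) − erf( (C̄·D̄ − 2Ā²·D̄ − 2Ā·B̄)/(√2·√C̄·√(C̄ − 2Ā²)) ), and Ī₂ = exp(F̄²/2) · ( (1/2)·erfc((D̄ − F̄)/√2) − (1/2)·erfc((Ē − F̄)/√2) ). -/
/-!
After multiplication by the standard normal density the integrand is the exponential of a
piecewise quadratic in `h`. The minimum vanishes exactly on the open interval `(D̄, Ē)`, where the
exponent is `F̄²/2 - (h - F̄)²/2` up to the prefactor; outside it, completing the square gives a
constant minus `(C̄ - 2Ā²)/(2C̄) · (h - 2ĀB̄/(C̄ - 2Ā²))²`, a genuine Gaussian because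
`2γ > c₂(1 - q₂)`. Integrating this Gaussian over all of `ℝ`, removing its part over `(D̄, Ē)`
and adding the inner Gaussian over `(D̄, Ē)` gives `Ī₁` and `Ī₂` through `erf`.
-/

open MeasureTheory ProbabilityTheory Real

open Set

theorem intervalIntegral_exp_neg_sq (p q : ℝ) :
    ∫ u in p..q, exp (-u ^ 2) = √π / 2 * (erf q - erf p) := by
  have hi (a c : ℝ) : IntervalIntegrable (fun u => exp (-u ^ 2)) volume a c :=
    (by fun_prop : Continuous fun u : ℝ => exp (-u ^ 2)).intervalIntegrable a c
  rw [← intervalIntegral.integral_add_adjacent_intervals (hi p 0) (hi 0 q),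
    intervalIntegral.integral_symm 0 p, erf, erf]
  field_simp
  ring

theorem intervalIntegral_exp_neg_mul_sq_sub {b : ℝ} (hb : 0 < b) (m D E : ℝ) :
    ∫ x in D..E, exp (-b * (x - m) ^ 2) =
      √π / (2 * √b) * (erf (√b * (E - m)) - erf (√b * (D - m))) := by
  have hsb : 0 < √b := sqrt_pos.2 hb
  have hsq (x : ℝ) : -b * (x - m) ^ 2 = -(√b * x + -(√b * m)) ^ 2 := by
    linear_combination (x - m) ^ 2 * sq_sqrt hb.le
  simp_rw [hsq, intervalIntegral.integral_comp_mul_add (fun u => exp (-u ^ 2)) hsb.ne',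
    intervalIntegral_exp_neg_sq, smul_eq_mul]
  field_simp
  simp only [← sub_eq_add_neg]

theorem integral_exp_neg_mul_sq_sub (b m : ℝ) :
    ∫ x, exp (-b * (x - m) ^ 2) = √(π / b) := by
  rw [integral_sub_right_eq_self (fun x => exp (-b * x ^ 2)) m, integral_gaussian]

theorem integral_piecewise_Ioo {F : Type*} [NormedAddCommGroup F] [NormedSpace ℝ F]
    {f g : ℝ → F} {D E : ℝ} (hDE : D ≤ E) (hf : Integrable f)
    (hg : IntervalIntegrable g volume D E) :
    ∫ x, (Ioo D E).piecewise g f x =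
      (∫ x, f x) - (∫ x in D..E, f x) + ∫ x in D..E, g x := by
  have hg' : IntegrableOn g (Ioo D E) :=
    (intervalIntegrable_iff_integrableOn_Ioo_of_le hDE).1 hg
  rw [integral_piecewise measurableSet_Ioo hg' hf.integrableOn,
    setIntegral_compl measurableSet_Ioo hf, intervalIntegral.integral_of_le hDE,
    intervalIntegral.integral_of_le hDE, integral_Ioc_eq_integral_Ioo,
    integral_Ioc_eq_integral_Ioo]
  abel

theorem integral_piecewise_Ioo_exp_neg_mul_sq {b : ℝ} (hb : 0 < b) {D E : ℝ} (hDE : D ≤ E)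
    (K₁ K₂ m F : ℝ) :
    ∫ x, (Ioo D E).piecewise (fun x => K₂ * exp (-(1 / 2) * (x - F) ^ 2))
        (fun x => K₁ * exp (-b * (x - m) ^ 2)) x
      = K₁ * (√π / (2 * √b)) * (2 - (erf (√b * (E - m)) - erf (√b * (D - m))))
        + K₂ * √(2 * π) * (1 / 2 * erfc ((D - F) / √2) - 1 / 2 * erfc ((E - F) / √2)) := by
  have hf : Integrable fun x => K₁ * exp (-b * (x - m) ^ 2) := by
    simpa using ((integrable_exp_neg_mul_sq hb).comp_sub_right m).const_mul K₁
  rw [integral_piecewise_Ioo hDE hf (Continuous.intervalIntegrable (by fun_prop) _ _),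
    integral_const_mul, intervalIntegral.integral_const_mul,
    intervalIntegral.integral_const_mul, integral_exp_neg_mul_sq_sub,
    intervalIntegral_exp_neg_mul_sq_sub hb, intervalIntegral_exp_neg_mul_sq_sub one_half_pos,
    sqrt_div pi_pos.le, one_div, sqrt_inv, sqrt_mul zero_le_two, erfc, erfc]
  have h2 : √2 ≠ 0 := by positivity
  have hb' : √b ≠ 0 := (sqrt_pos.2 hb).ne'
  field_simp
  ring

theorem integral_gaussianReal_zero_one (f : ℝ → ℝ) :
    ∫ x, f x ∂gaussianReal 0 1 = (√(2 * π))⁻¹ * ∫ x, exp (-x ^ 2 / 2) * f x := by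
  rw [integral_gaussianReal_eq_integral_smul one_ne_zero, ← integral_const_mul]
  congr 1 with x
  simp [gaussianPDFReal, mul_assoc]

theorem mem_Ioo_iff_pos_sub_sq_div {γ ν s c x : ℝ} (hγ : 0 < γ) (hν : 0 ≤ ν)
    (hs : 0 < s) :
    x ∈ Ioo ((-c - 2 * √(γ * ν)) / s) ((-c + 2 * √(γ * ν)) / s) ↔
      0 < ν - (s * x + c) ^ 2 / (4 * γ) := by
  have hr : 0 ≤ 2 * √(γ * ν) := by positivity
  rw [sub_pos, div_lt_iff₀ (by positivity), show ν * (4 * γ) = (2 * √(γ * ν)) ^ 2 by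
    rw [mul_pow, sq_sqrt (by positivity)]; ring, sq_lt_sq, abs_of_nonneg hr, abs_lt,
    mem_Ioo, div_lt_iff₀ hs, lt_div_iff₀ hs]
  constructor <;> rintro ⟨h₁, h₂⟩ <;> constructor <;> linarith

theorem neg_sq_div_two_add_mul_add_sq_div {A B₁ C F B : ℝ} (hA : A ≠ 0) (hC : C ≠ 0)
    (hP : C - 2 * A ^ 2 ≠ 0) (hB : B = F * C / (2 * A) + B₁) (x : ℝ) :
    -x ^ 2 / 2 + F * x + (A * x + B₁) ^ 2 / C =
      (B₁ ^ 2 - B ^ 2) / C + B ^ 2 / (C - 2 * A ^ 2)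
        - (C - 2 * A ^ 2) / (2 * C) * (x - 2 * A * B / (C - 2 * A ^ 2)) ^ 2 := by
  subst hB
  field_simp
  ring

theorem exp_neg_sq_div_two_mul_exp_eq_piecewise {γ ν c₂ s a d ν₁ D E A B₁ C F B G : ℝ}
    (hγ : 0 < γ) (hν : 0 ≤ ν) (hc : 0 < c₂) (hs : 0 < s)
    (hD : D = (-(a + d * ν₁) - 2 * √(γ * ν)) / s)
    (hE : E = (-(a + d * ν₁) + 2 * √(γ * ν)) / s)
    (hA : A = √c₂ * s) (hB₁ : B₁ = √c₂ * (a + d * ν₁)) (hC : C = 4 * γ) (hF : F = c₂ * d * s)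
    (hB : B = F * C / (2 * A) + B₁) (hG : G = (B₁ ^ 2 - B ^ 2) / C) (hP : C - 2 * A ^ 2 ≠ 0)
    (x : ℝ) :
    exp (-x ^ 2 / 2) *
        exp (c₂ * ((s * x + a) * d - min (ν - (s * x + a + ν₁ * d) ^ 2 / (4 * γ)) 0))
      = exp (c₂ * d * a) *
        (Ioo D E).piecewise
          (fun x => exp (F ^ 2 / 2) * exp (-(1 / 2) * (x - F) ^ 2))
          (fun x => exp (-(c₂ * ν) + G + B ^ 2 / (C - 2 * A ^ 2)) *
            exp (-((C - 2 * A ^ 2) / (2 * C)) * (x - 2 * A * B / (C - 2 * A ^ 2)) ^ 2)) x := by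
  set w := s * x + (a + d * ν₁)
  have hw : s * x + a + ν₁ * d = w := by ring
  rw [piecewise, hw, hD, hE]
  split_ifs with hx <;> rw [mem_Ioo_iff_pos_sub_sq_div hγ hν hs] at hx
  · rw [min_eq_right hx.le, ← exp_add, ← exp_add, ← exp_add, hF]
    congr 1
    ring
  · rw [min_eq_left (not_lt.1 hx), ← exp_add, ← exp_add, ← exp_add]
    have hsq := neg_sq_div_two_add_mul_add_sq_div (x := x) (by rw [hA]; positivity)
      (by rw [hC]; positivity) hP hB
    have hquad : (A * x + B₁) ^ 2 / C = c₂ * w ^ 2 / (4 * γ) := by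
      rw [hA, hB₁, hC]
      linear_combination w ^ 2 / (4 * γ) * sq_sqrt hc.le
    congr 1
    linear_combination hsq - x * hF - hquad - hG

theorem sqrt_div_mul_sub_div_eq {A B C : ℝ} (hC : 0 < C) (hP : 0 < C - 2 * A ^ 2) (x : ℝ) :
    √((C - 2 * A ^ 2) / (2 * C)) * (x - 2 * A * B / (C - 2 * A ^ 2))
      = (C * x - 2 * A ^ 2 * x - 2 * A * B) / (√2 * √C * √(C - 2 * A ^ 2)) := by
  rw [sqrt_div hP.le, sqrt_mul zero_le_two]
  have : √(C - 2 * A ^ 2) ≠ 0 := (sqrt_pos.2 hP).ne'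
  field_simp
  linear_combination (x * (C - 2 * A ^ 2) - 2 * A * B) * sq_sqrt hP.le

/-- Evaluation of `E_{U₂} Z₁^{(2)}`, the inner Gaussian average of the
support-coordinate partition term at the second level of lifting. -/
theorem stmt15 (γ ν c₂ q₂ ν₁ dbar h₃ : ℝ) (hγ : 0 < γ) (hν : 0 ≤ ν) (hc : 0 < c₂)
    (hq₂ : q₂ ∈ Set.Ico (0:ℝ) 1) (hkey : c₂ * (1 - q₂) < 2 * γ)
    (Db Eb Ab B₁b Cb Fb Bb Gb : ℝ)
    (hDb : Db = (-(h₃ * Real.sqrt q₂ + dbar * ν₁) - 2 * Real.sqrt (γ * ν)) /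
        Real.sqrt (1 - q₂))
    (hEb : Eb = (-(h₃ * Real.sqrt q₂ + dbar * ν₁) + 2 * Real.sqrt (γ * ν)) /
        Real.sqrt (1 - q₂))
    (hAb : Ab = Real.sqrt (c₂ * (1 - q₂)))
    (hB₁b : B₁b = h₃ * Real.sqrt (c₂ * q₂) + Real.sqrt c₂ * dbar * ν₁)
    (hCb : Cb = 4 * γ)
    (hFb : Fb = c₂ * dbar * Real.sqrt (1 - q₂))
    (hBb : Bb = Fb * Cb / (2 * Ab) + B₁b)
    (hGb : Gb = (B₁b ^ 2 - Bb ^ 2) / Cb)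
    (Qb I₁b I₂b : ℝ)
    (hQb : Qb = erf ((Cb * Eb - 2 * Ab ^ 2 * Eb - 2 * Ab * Bb) /
          (Real.sqrt 2 * Real.sqrt Cb * Real.sqrt (Cb - 2 * Ab ^ 2)))
      - erf ((Cb * Db - 2 * Ab ^ 2 * Db - 2 * Ab * Bb) /
          (Real.sqrt 2 * Real.sqrt Cb * Real.sqrt (Cb - 2 * Ab ^ 2))))
    (hI₁b : I₁b = (Real.sqrt Cb / (2 * Real.sqrt (Cb - 2 * Ab ^ 2))) *
        Real.exp (-(c₂ * ν) + Gb + Bb ^ 2 / (Cb - 2 * Ab ^ 2)) * (2 - Qb))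
    (hI₂b : I₂b = Real.exp (Fb ^ 2 / 2) *
        ((1 / 2) * erfc ((Db - Fb) / Real.sqrt 2)
          - (1 / 2) * erfc ((Eb - Fb) / Real.sqrt 2))) :
    ∫ h : ℝ, Real.exp (c₂ *
        ((Real.sqrt (1 - q₂) * h + Real.sqrt q₂ * h₃) * dbar
          - min (ν - (Real.sqrt (1 - q₂) * h + Real.sqrt q₂ * h₃ + ν₁ * dbar) ^ 2 /
              (4 * γ)) 0)) ∂(gaussianReal 0 1)
    = Real.exp (c₂ * dbar * Real.sqrt q₂ * h₃) * (I₁b + I₂b) := by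
  have hs : 0 < √(1 - q₂) := sqrt_pos.2 (sub_pos.2 hq₂.2)
  have hA : Ab = √c₂ * √(1 - q₂) := hAb.trans (sqrt_mul hc.le _)
  have hB₁ : B₁b = √c₂ * (√q₂ * h₃ + dbar * ν₁) := by rw [hB₁b, sqrt_mul hc.le]; ring
  have hC : 0 < Cb := by rw [hCb]; positivity
  have hP : 0 < Cb - 2 * Ab ^ 2 := by
    rw [hCb, hAb, sq_sqrt (mul_nonneg hc.le (sub_nonneg.2 hq₂.2.le))]
    linarith
  have hDE : Db ≤ Eb := by
    rw [hDb, hEb]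
    gcongr
    linarith [sqrt_nonneg (γ * ν)]
  rw [mul_comm h₃] at hDb hEb
  rw [integral_gaussianReal_zero_one]
  simp_rw [exp_neg_sq_div_two_mul_exp_eq_piecewise hγ hν hc hs hDb hEb hA hB₁ hCb hFb hBb hGb
    hP.ne']
  rw [integral_const_mul, integral_piecewise_Ioo_exp_neg_mul_sq (by positivity) hDE,
    sqrt_div_mul_sub_div_eq hC hP, sqrt_div_mul_sub_div_eq hC hP, ← hQb]
  rw [hI₁b, hI₂b, sqrt_div hP.le, sqrt_mul zero_le_two Cb, sqrt_mul zero_le_two π]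
  field_simp
end
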